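/- Let \kappa be a nonzero complex number. There exists a unique formal power series g(u,h) in C((u))[[h]] such that g(u,0) = (1 - e^{-u})^{-2} and g(u,h) g(u + \kappa h, h) = 1/((1 - e^{-u-h})(1 - e^{-u+h})(1 - e^{-u-\kappa h})(1 - e^{-u+\kappa h})), where all expressions of the form (1 - e^{-u+ah})^{-1} are expanded as elements of C((u))[[h]] and g(u+\kappa h, h) is defined by the formal Taylor expansion. -/

import Mathlib

noncomputable section

/-- Formal derivative of a power series. -/
def psDeriv (f : PowerSeries ℂ) : PowerSeries ℂ :=
  PowerSeries.mk fun n => ((n : ℂ) + 1) * PowerSeries.coeff (n + 1) f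

/-- Formal derivative of a Laurent series. -/
def lsDeriv (f : LaurentSeries ℂ) : LaurentSeries ℂ :=
  HahnSeries.single (f.order - 1) ((f.order : ℤ) : ℂ) *
      HahnSeries.ofPowerSeries ℤ ℂ f.powerSeriesPart
    + HahnSeries.single f.order (1 : ℂ) *
      HahnSeries.ofPowerSeries ℤ ℂ (psDeriv f.powerSeriesPart)

/-- The formal Taylor shift `g(u,h) ↦ g(u + κh, h)` on `ℂ((u))[[h]]`. -/
def taylorShift (κ : ℂ) (G : PowerSeries (LaurentSeries ℂ)) : PowerSeries (LaurentSeries ℂ) :=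
  PowerSeries.mk fun k => ∑ m ∈ Finset.range (k + 1),
    (κ ^ m / (m.factorial : ℂ)) • lsDeriv^[m] (PowerSeries.coeff (k - m) G)

/-- `e^{-u} ∈ ℂ[[u]] ⊆ ℂ((u))`. -/
def expNegU : LaurentSeries ℂ :=
  HahnSeries.ofPowerSeries ℤ ℂ (PowerSeries.rescale (-1) (PowerSeries.exp ℂ))

/-- `(1 - e^{-u+ah})⁻¹ ∈ ℂ((u))[[h]]`, expanded by the Taylor formula
`∑_{l ≥ 0} (ah)^l/l! · ∂_u^l (1 - e^{-u})⁻¹`. -/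
def shiftInv (a : ℂ) : PowerSeries (LaurentSeries ℂ) :=
  PowerSeries.mk fun l =>
    (a ^ l / (l.factorial : ℂ)) • lsDeriv^[l] ((1 - expNegU)⁻¹)

/-!
Write `g = ∑ gₖ hᵏ`. The `hᵏ`-coefficient of the Taylor shift `g(u + κh, h)` is `gₖ` plus
derivatives of `g₀, …, gₖ₋₁`, so the `hᵏ⁺¹`-coefficient of `g(u,h) g(u + κh, h)` is
`2 g₀ gₖ₊₁` plus an expression in `g₀, …, gₖ`. Since `g₀ = (1 - e^{-u})⁻²` is invertible and
the constant term of the right-hand side is `g₀²`, comparing coefficients determines `g`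
uniquely and recursively.
-/

theorem WellFoundedLT.existsUnique_fixed {ι α : Type*} [LT ι] [WellFoundedLT ι] [Nonempty α]
    (Φ : ι → (ι → α) → α)
    (hΦ : ∀ i f f', (∀ j < i, f j = f' j) → Φ i f = Φ i f') :
    ∃! f : ι → α, ∀ i, f i = Φ i f := by
  classical
  let f : ι → α := WellFoundedLT.fix fun i rec =>
    Φ i fun j => if h : j < i then rec j h else Classical.arbitrary α
  have hf : ∀ i, f i = Φ i f := fun i => by
    rw [show f i = _ from WellFoundedLT.fix_eq _ i]
    exact hΦ i _ _ fun j hj => by simp [hj, f]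
  refine ⟨f, hf, fun f' hf' => funext fun i => ?_⟩
  induction i using WellFoundedLT.induction with
  | _ i ih => rw [hf', hf, hΦ i _ _ ih]

namespace PowerSeries

variable {R : Type*} [CommRing R]

def IsUnitriangular (F : R⟦X⟧ → R⟦X⟧) : Prop :=
  ∀ k g g', (∀ i < k, coeff i g = coeff i g') → coeff k (F g - g) = coeff k (F g' - g')

namespace IsUnitriangular

variable {F : R⟦X⟧ → R⟦X⟧}

theorem coeff_apply_congr (hF : IsUnitriangular F) {k : ℕ} {g g' : R⟦X⟧}
    (h : ∀ i ≤ k, coeff i g = coeff i g') : coeff k (F g) = coeff k (F g') := by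
  have := hF k g g' fun i hi => h i hi.le
  rwa [map_sub, map_sub, h k le_rfl, sub_left_inj] at this

theorem coeff_succ_mul_apply_congr (hF : IsUnitriangular F)
    (hF₀ : ∀ g, constantCoeff (F g) = constantCoeff g) {k : ℕ} {g g' : R⟦X⟧}
    (h : ∀ i ≤ k, coeff i g = coeff i g') :
    coeff (k + 1) (g * F g) - 2 * coeff 0 g * coeff (k + 1) g
      = coeff (k + 1) (g' * F g') - 2 * coeff 0 g' * coeff (k + 1) g' := by
  have split : ∀ g, coeff (k + 1) (g * F g) - 2 * coeff 0 g * coeff (k + 1) g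
      = coeff 0 g * coeff (k + 1) (F g - g)
        + ∑ i ∈ Finset.range k, coeff (i + 1) g * coeff (k - i) (F g) := fun g => by
    rw [coeff_mul, Finset.Nat.sum_antidiagonal_eq_sum_range_succ_mk, Finset.sum_range_succ,
      Finset.sum_range_succ']
    simp only [Nat.sub_zero, Nat.sub_self, Nat.add_sub_add_right, coeff_zero_eq_constantCoeff_apply,
      hF₀, map_sub]
    ring
  rw [split, split, h 0 (Nat.zero_le k), hF (k + 1) g g' fun i hi => h i (by omega)]
  congr 1
  refine Finset.sum_congr rfl fun i hi => ?_
  rw [Finset.mem_range] at hi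
  rw [h (i + 1) hi, hF.coeff_apply_congr fun j hj => h j (by omega)]

end IsUnitriangular

theorem existsUnique_mul_apply_eq {F : R⟦X⟧ → R⟦X⟧} (hF : IsUnitriangular F)
    (hF₀ : ∀ g, constantCoeff (F g) = constantCoeff g) {c : R} (hc : IsUnit (2 * c))
    {r : R⟦X⟧} (hr : constantCoeff r = c ^ 2) :
    ∃! g : R⟦X⟧, coeff 0 g = c ∧ g * F g = r := by
  -- `Φ k f` is the value of `f k` forced by the equation, given `f 0, …, f (k - 1)`.
  let Φ : ℕ → (ℕ → R) → R
    | 0, _ => c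
    | k + 1, f => ↑hc.unit⁻¹ * (coeff (k + 1) r
        - (coeff (k + 1) (mk f * F (mk f)) - 2 * f 0 * f (k + 1)))
  have hΦ : ∀ k f f', (∀ i < k, f i = f' i) → Φ k f = Φ k f' := by
    rintro (_ | k) f f' h
    · rfl
    · have := hF.coeff_succ_mul_apply_congr hF₀ (g := mk f) (g' := mk f') (k := k)
        fun i hi => by simpa using h i (by omega)
      simp only [coeff_mk] at this
      simp only [Φ, this]
  have solution_iff :
      ∀ f, (coeff 0 (mk f) = c ∧ mk f * F (mk f) = r) ↔ ∀ k, f k = Φ k f := by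
    intro f
    rw [coeff_mk]
    constructor
    · rintro ⟨h₀, hfr⟩ (_ | k)
      · exact h₀
      · simp only [Φ, hfr, h₀]
        rw [sub_sub_cancel, ← mul_assoc, hc.val_inv_mul, one_mul]
    · intro h
      have h₀ : f 0 = c := h 0
      refine ⟨h₀, ext fun k => ?_⟩
      rcases k with _ | k
      · simp only [coeff_zero_eq_constantCoeff_apply, map_mul, hF₀, hr]
        rw [← coeff_zero_eq_constantCoeff_apply, coeff_mk, h₀, sq]
      · have := congrArg (2 * c * ·) (h (k + 1))
        simp only [Φ, h₀, ← mul_assoc, hc.mul_val_inv, one_mul] at this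
        linear_combination this
  obtain ⟨f, hf, hf_unique⟩ := WellFoundedLT.existsUnique_fixed Φ hΦ
  refine ⟨mk f, (solution_iff f).2 hf, fun g hg => ?_⟩
  obtain ⟨f', rfl⟩ : ∃ f', mk f' = g := ⟨(coeff · g), ext fun _ => coeff_mk _ _⟩
  rw [hf_unique f' ((solution_iff f').1 hg)]

end PowerSeries

theorem taylorShift_isUnitriangular (κ : ℂ) : PowerSeries.IsUnitriangular (taylorShift κ) := by
  have coeff_sub : ∀ k g, PowerSeries.coeff k (taylorShift κ g - g)
      = ∑ m ∈ Finset.range k, (κ ^ (m + 1) / ((m + 1).factorial : ℂ)) •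
          lsDeriv^[m + 1] (PowerSeries.coeff (k - (m + 1)) g) := fun k g => by
    simp [taylorShift, Finset.sum_range_succ']
  intro k g g' h
  rw [coeff_sub, coeff_sub]
  refine Finset.sum_congr rfl fun m hm => ?_
  rw [h _ (by rw [Finset.mem_range] at hm; omega)]

theorem constantCoeff_taylorShift (κ : ℂ) (g : PowerSeries (LaurentSeries ℂ)) :
    PowerSeries.constantCoeff (taylorShift κ g) = PowerSeries.constantCoeff g := by
  rw [← PowerSeries.coeff_zero_eq_constantCoeff_apply,
    ← PowerSeries.coeff_zero_eq_constantCoeff_apply]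
  simp [taylorShift]

theorem constantCoeff_shiftInv (a : ℂ) :
    PowerSeries.constantCoeff (shiftInv a) = (1 - expNegU)⁻¹ := by
  rw [← PowerSeries.coeff_zero_eq_constantCoeff_apply]
  simp [shiftInv]

theorem one_sub_expNegU_ne_zero : (1 : LaurentSeries ℂ) - expNegU ≠ 0 := by
  have coeff_one_ne_zero :
      PowerSeries.coeff 1 (1 - PowerSeries.rescale (-1 : ℂ) (PowerSeries.exp ℂ)) ≠ 0 := by
    simp [PowerSeries.coeff_one]
  rw [expNegU, ← map_one (HahnSeries.ofPowerSeries ℤ ℂ), ← map_sub, ne_eq,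
    map_eq_zero_iff _ HahnSeries.ofPowerSeries_injective]
  exact fun h => coeff_one_ne_zero (by rw [h, map_zero])

theorem stmt3_general (κ : ℂ) :
    ∃! g : PowerSeries (LaurentSeries ℂ),
      PowerSeries.coeff 0 g = ((1 - expNegU)⁻¹) ^ 2 ∧
      g * taylorShift κ g = shiftInv 1 * shiftInv (-1) * shiftInv κ * shiftInv (-κ) := by
  have h2 : IsUnit (2 : LaurentSeries ℂ) := by
    simpa only [map_ofNat] using
      (Ne.isUnit (two_ne_zero : (2 : ℂ) ≠ 0)).map (algebraMap ℂ (LaurentSeries ℂ))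
  have hc := h2.mul (Ne.isUnit (pow_ne_zero 2 (inv_ne_zero one_sub_expNegU_ne_zero)))
  refine PowerSeries.existsUnique_mul_apply_eq (taylorShift_isUnitriangular κ)
    (constantCoeff_taylorShift κ) hc ?_
  simp only [map_mul, constantCoeff_shiftInv]
  ring

/-- for `κ ≠ 0` there is a unique `g(u,h) ∈ ℂ((u))[[h]]` with
`g(u,0) = (1 - e^{-u})⁻²` and
`g(u,h) g(u+κh,h) = 1/((1-e^{-u-h})(1-e^{-u+h})(1-e^{-u-κh})(1-e^{-u+κh}))`,
where the shift `g(u+κh,h)` is the formal Taylor expansion and each factor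
`(1-e^{-u+ah})⁻¹` is expanded in `ℂ((u))[[h]]`.
Note `(1-e^{-u-h})⁻¹ = shiftInv 1` (shift `u ↦ u + h`), etc. -/
theorem stmt3 (κ : ℂ) (hκ : κ ≠ 0) :
    ∃! g : PowerSeries (LaurentSeries ℂ),
      PowerSeries.coeff 0 g = ((1 - expNegU)⁻¹) ^ 2 ∧
      g * taylorShift κ g = shiftInv 1 * shiftInv (-1) * shiftInv κ * shiftInv (-κ) :=
  stmt3_general κ

end
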